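/- arXiv:2201.06503 — 2 statements merged into one kernel-verified Lean document; each statement's English description precedes it below -/
import Mathlib

section
/- Suppose q(x_{0:N}) is a joint probability density on (ℝ^d)^{N+1} and p(x_{0:N}) = p(x_N) ∏_{n=1}^N p(x_{n−1} | xₙ) is a Markov chain (in the reverse direction). Then E_q[D_KL(q(x_{0:N−1} | x_N) ‖ p(x_{0:N−1} | x_N))] = ∑_{n=1}^N E_q[D_KL(q(x_{n−1} | xₙ) ‖ p(x_{n−1} | xₙ))] + c, where c = ∑_{n=1}^N E_q[H(q(x_{n−1} | xₙ))] − E_q[H(q(x_{0:N−1} | x_N))] depends only on q. In particular, if q(x_{0:N}) is itself a Markov chain, then c = 0. -/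
/-!
Taking logarithms turns the reverse Markov factorization of `p` into a sum, so the conditional
KL divergence of the whole chain is `E_q[log q(x_{0:N-1} | x_N)] - ∑ₙ E_q[log p(x_{n-1} | xₙ)]`,
while each one-step KL divergence is `E_q[log q(x_{n-1} | xₙ)] - E_q[log p(x_{n-1} | xₙ)]`.
The `p`-terms cancel in the difference, which leaves exactly the entropy gap `c`. When `q` is
Markov its conditional density factorizes in the same way, so `log q(x_{0:N-1} | x_N)` is the
sum of the one-step terms and `c = 0`.
-/

open MeasureTheory Finset

noncomputable def marg {N d : ℕ} (Q : (Fin (N + 1) → Fin d → ℝ) → ℝ)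
    (s : Finset (Fin (N + 1))) (x : Fin (N + 1) → Fin d → ℝ) : ℝ :=
  ∫ y : {i : Fin (N + 1) // i ∉ s} → (Fin d → ℝ),
    Q (fun i => if h : i ∈ s then x i else y ⟨i, h⟩)

/-- The numerator may vanish where the weight `c` does: there the junk value `Real.log 0 = 0`
breaks `log (a / b) = log a - log b`, but both sides are `0`. -/
lemma Real.mul_log_div_eq_sub {c a b : ℝ} (ha : c ≠ 0 → a ≠ 0) (hb : b ≠ 0) :
    c * Real.log (a / b) = c * Real.log a - c * Real.log b := by
  rcases eq_or_ne c 0 with rfl | hc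
  · simp
  · rw [Real.log_div (ha hc) hb, mul_sub]

lemma integral_sub_sum_eq_sum_integral_sub_add {α ι : Type*} [MeasurableSpace α] {μ : Measure α}
    (s : Finset ι) {F : α → ℝ} {G p : ι → α → ℝ} (hF : Integrable F μ)
    (hG : ∀ i, Integrable (G i) μ) (hp : ∀ i, Integrable (p i) μ) :
    ∫ x, (F x - ∑ i ∈ s, p i x) ∂μ
      = ∑ i ∈ s, ∫ x, (G i x - p i x) ∂μ
        + (∑ i ∈ s, -∫ x, G i x ∂μ - -∫ x, F x ∂μ) := by
  rw [integral_sub hF (integrable_finsetSum _ fun i _ => hp i),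
    integral_finsetSum _ fun i _ => hp i]
  simp only [integral_sub (hG _) (hp _), sum_sub_distrib, sum_neg_distrib]
  ring

/-- let `Q` be a joint density on `(ℝ^d)^{N+1}` and let
`p(x_{0:N}) = p(x_N) ∏ₙ p(x_{n−1}|xₙ)` be a (reverse) Markov chain with transition densities
`P n xₙ x_{n−1}`.  Then
`E_q[D_KL(q(x_{0:N−1}|x_N) ‖ p(x_{0:N−1}|x_N))]
  = ∑ₙ E_q[D_KL(q(x_{n−1}|xₙ) ‖ p(x_{n−1}|xₙ))] + c`
with `c = ∑ₙ E_q[H(q(x_{n−1}|xₙ))] − E_q[H(q(x_{0:N−1}|x_N))]`, and if `Q` is itself a Markov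
chain then `c = 0`. -/
theorem stmt_7 {N d : ℕ} (Q : (Fin (N + 1) → Fin d → ℝ) → ℝ)
    (P : Fin N → (Fin d → ℝ) → (Fin d → ℝ) → ℝ)
    (hP_pos : ∀ n v u, 0 < P n v u)
    (hpos : ∀ (s : Finset (Fin (N + 1))) (x : Fin (N + 1) → Fin d → ℝ), 0 < marg Q s x)
    (hint_cond : Integrable (fun x => Q x * Real.log (Q x / marg Q {Fin.last N} x)))
    (hint_pair : ∀ n : Fin N, Integrable (fun x =>
      Q x * Real.log (marg Q {n.castSucc, n.succ} x / marg Q {n.succ} x)))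
    (hint_P : ∀ n : Fin N, Integrable (fun x =>
      Q x * Real.log (P n (x n.succ) (x n.castSucc)))) :
    ((∫ x, Q x * Real.log ((Q x / marg Q {Fin.last N} x)
          / ∏ n : Fin N, P n (x n.succ) (x n.castSucc)))
      = (∑ n : Fin N, ∫ x, Q x * Real.log
            ((marg Q {n.castSucc, n.succ} x / marg Q {n.succ} x)
              / P n (x n.succ) (x n.castSucc)))
        + ((∑ n : Fin N,
              - ∫ x, Q x * Real.log (marg Q {n.castSucc, n.succ} x / marg Q {n.succ} x))
            - (- ∫ x, Q x * Real.log (Q x / marg Q {Fin.last N} x)))) ∧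
    ((∀ x, Q x = marg Q {Fin.last N} x *
        ∏ n : Fin N, marg Q {n.castSucc, n.succ} x / marg Q {n.succ} x) →
      (∑ n : Fin N,
          - ∫ x, Q x * Real.log (marg Q {n.castSucc, n.succ} x / marg Q {n.succ} x))
        - (- ∫ x, Q x * Real.log (Q x / marg Q {Fin.last N} x)) = 0) := by
  have hpair_pos : ∀ n : Fin N, ∀ x, 0 < marg Q {n.castSucc, n.succ} x / marg Q {n.succ} x :=
    fun n x => div_pos (hpos _ x) (hpos _ x)
  constructor
  · have hchain : ∀ x, Q x * Real.log ((Q x / marg Q {Fin.last N} x)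
          / ∏ n : Fin N, P n (x n.succ) (x n.castSucc))
        = Q x * Real.log (Q x / marg Q {Fin.last N} x)
          - ∑ n : Fin N, Q x * Real.log (P n (x n.succ) (x n.castSucc)) := fun x => by
      rw [Real.mul_log_div_eq_sub (fun hQ => div_ne_zero hQ (hpos _ x).ne')
          (prod_pos fun n _ => hP_pos n _ _).ne',
        Real.log_prod fun n _ => (hP_pos n _ _).ne', mul_sum]
    have hstep : ∀ (n : Fin N) x,
        Q x * Real.log ((marg Q {n.castSucc, n.succ} x / marg Q {n.succ} x)
          / P n (x n.succ) (x n.castSucc))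
        = Q x * Real.log (marg Q {n.castSucc, n.succ} x / marg Q {n.succ} x)
          - Q x * Real.log (P n (x n.succ) (x n.castSucc)) := fun n x =>
      Real.mul_log_div_eq_sub (fun _ => (hpair_pos n x).ne') (hP_pos n _ _).ne'
    simp only [hchain, hstep]
    exact integral_sub_sum_eq_sum_integral_sub_add _ hint_cond hint_pair hint_P
  · intro hmarkov
    have hcond : ∀ x, Q x * Real.log (Q x / marg Q {Fin.last N} x)
        = ∑ n : Fin N,
            Q x * Real.log (marg Q {n.castSucc, n.succ} x / marg Q {n.succ} x) := fun x => by
      rw [hmarkov x, mul_div_cancel_left₀ _ (hpos _ x).ne', ← hmarkov x,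
        Real.log_prod fun n _ => (hpair_pos n x).ne', mul_sum]
    simp only [hcond, integral_finsetSum _ fun n _ => hint_pair n, sum_neg_distrib, sub_self]
end

section
/- For the generalized forward process, the optimal reverse variance σₙ*² satisfies the bounds λₙ² ≤ σₙ*² ≤ λₙ² + (√(β̄ₙ/αₙ) − √(β̄_{n−1} − λₙ²))². If furthermore the data distribution q(x₀) is supported in the cube [a, b]^d, then also σₙ*² ≤ λₙ² + (√ᾱ_{n−1} − √(β̄_{n−1} − λₙ²) · √(ᾱₙ/β̄ₙ))² · ((b − a)/2)². -/
open MeasureTheory Finset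

/-- Isotropic Gaussian density `N(μ, s·I)` on `ℝ^d`. -/
noncomputable def gaussIso (d : ℕ) (μ : Fin d → ℝ) (s : ℝ) (x : Fin d → ℝ) : ℝ :=
  (2 * Real.pi * s) ^ (-(d : ℝ) / 2) * Real.exp (-(∑ i, (x i - μ i) ^ 2) / (2 * s))

/-- `ᾱₙ = ∏_{i=1}^n (1 − βᵢ)`. -/
noncomputable def alphaBar (β : ℕ → ℝ) (n : ℕ) : ℝ := ∏ i ∈ Finset.Icc 1 n, (1 - β i)

/-- `β̄ₙ = 1 − ᾱₙ`. -/
noncomputable def betaBar (β : ℕ → ℝ) (n : ℕ) : ℝ := 1 - alphaBar β n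

/-- Joint density of `(x₀, xₙ)`, using the marginal `q(xₙ|x₀) = N(√ᾱₙ x₀, β̄ₙ I)`. -/
noncomputable def joint0n (d : ℕ) (β : ℕ → ℝ) (q0 : (Fin d → ℝ) → ℝ) (n : ℕ)
    (x0 xn : Fin d → ℝ) : ℝ :=
  q0 x0 * gaussIso d (fun i => Real.sqrt (alphaBar β n) * x0 i) (betaBar β n) xn

/-- Marginal density `qₙ(xₙ)`. -/
noncomputable def margN (d : ℕ) (β : ℕ → ℝ) (q0 : (Fin d → ℝ) → ℝ) (n : ℕ)
    (xn : Fin d → ℝ) : ℝ :=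
  ∫ x0, joint0n d β q0 n x0 xn

/-- Conditional mean `E_{q(x₀|xₙ)}[x₀]`. -/
noncomputable def condMean0 (d : ℕ) (β : ℕ → ℝ) (q0 : (Fin d → ℝ) → ℝ) (n : ℕ)
    (xn : Fin d → ℝ) : Fin d → ℝ :=
  fun i => (∫ x0, joint0n d β q0 n x0 xn * x0 i) / margN d β q0 n xn

/-- `E_{qₙ(xₙ)}[tr(Cov_{q(x₀|xₙ)}[x₀])]`. -/
noncomputable def EtrCov (d : ℕ) (β : ℕ → ℝ) (q0 : (Fin d → ℝ) → ℝ) (n : ℕ) : ℝ :=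
  ∫ xn, ∫ x0, joint0n d β q0 n x0 xn * ∑ i, (x0 i - condMean0 d β q0 n xn i) ^ 2

/-- The optimal reverse variance
`σₙ*² = λₙ² + (√ᾱ_{n−1} − √(β̄_{n−1} − λₙ²)·√(ᾱₙ/β̄ₙ))² E_{qₙ}[tr Cov_{q(x₀|xₙ)}[x₀]/d]`. -/
noncomputable def sigmaStar2 (d : ℕ) (β lam : ℕ → ℝ) (q0 : (Fin d → ℝ) → ℝ) (n : ℕ) : ℝ :=
  lam n ^ 2 +
    (Real.sqrt (alphaBar β (n - 1)) -
        Real.sqrt (betaBar β (n - 1) - lam n ^ 2) *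
          Real.sqrt (alphaBar β n / betaBar β n)) ^ 2 *
      (EtrCov d β q0 n / d)

/-!
`σₙ*² − λₙ²` is a nonnegative multiple of `E = E_{qₙ}[tr Cov_{q(x₀|xₙ)}[x₀]]`, so everything
reduces to bounding `E`. For fixed `xₙ` the posterior mean minimises
`t ↦ E_{q(x₀|xₙ)} ‖x₀ − t‖²`. Taking `t = xₙ / √ᾱₙ` and integrating over `xₙ` first (given `x₀`,
`xₙ − √ᾱₙ x₀` is `N(0, β̄ₙ I)`) gives `E ≤ d β̄ₙ / ᾱₙ`; since `ᾱₙ = ᾱₙ₋₁ αₙ`, the coefficient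
of `E / d` times `β̄ₙ / ᾱₙ` is exactly `(√(β̄ₙ/αₙ) − √(β̄ₙ₋₁ − λₙ²))²`. Taking `t` the centre of
the cube gives `E ≤ d ((b − a)/2)²`.
-/

open Real ProbabilityTheory
open scoped NNReal

lemma integrable_prod_of_nonneg {α γ : Type*} [MeasurableSpace α] [MeasurableSpace γ]
    {μ : Measure α} {ν : Measure γ} [SFinite ν] {f : α × γ → ℝ}
    (hf : AEStronglyMeasurable f (μ.prod ν)) (hf0 : ∀ p, 0 ≤ f p)
    (hint : ∀ x, Integrable (fun y => f (x, y)) ν)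
    (hint' : Integrable (fun x => ∫ y, f (x, y) ∂ν) μ) : Integrable f (μ.prod ν) :=
  (integrable_prod_iff hf).2 ⟨ae_of_all _ hint, by simpa only [Real.norm_of_nonneg (hf0 _)]⟩

section ProdMulApply

variable {ι : Type*} [Fintype ι] [DecidableEq ι] (f : ι → ℝ → ℝ) (g : ℝ → ℝ) (j : ι)

lemma prod_mul_apply_eq_prod_update (x : ι → ℝ) :
    (∏ i, f i (x i)) * g (x j) = ∏ i, Function.update f j (fun t => f j t * g t) i (x i) := by
  rw [← Finset.mul_prod_erase _ _ (Finset.mem_univ j),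
    ← Finset.mul_prod_erase _ _ (Finset.mem_univ j), Function.update_self,
    Finset.prod_congr rfl fun i hi =>
      congrFun (Function.update_of_ne (Finset.ne_of_mem_erase hi) _ f) (x i)]
  ring

lemma integrable_prod_mul_apply (hf : ∀ i, Integrable (f i))
    (hg : Integrable fun t => f j t * g t) :
    Integrable fun x : ι → ℝ => (∏ i, f i (x i)) * g (x j) := by
  simp_rw [prod_mul_apply_eq_prod_update]
  refine Integrable.fintype_prod fun i => ?_
  rcases eq_or_ne i j with rfl | hij
  · simpa using hg
  · simpa [hij] using hf i

lemma integral_prod_mul_apply :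
    ∫ x : ι → ℝ, (∏ i, f i (x i)) * g (x j)
      = (∫ t, f j t * g t) * ∏ i ∈ Finset.univ.erase j, ∫ t, f i t := by
  simp_rw [prod_mul_apply_eq_prod_update]
  rw [integral_fintype_prod_volume_eq_prod, ← Finset.mul_prod_erase _ _ (Finset.mem_univ j),
    Function.update_self,
    Finset.prod_congr rfl fun i hi => by rw [Function.update_of_ne (Finset.ne_of_mem_erase hi)]]

end ProdMulApply

section Gaussian

lemma integrable_gaussianPDFReal_mul_sq_sub (m : ℝ) {v : ℝ≥0} (hv : v ≠ 0) :
    Integrable (fun x => gaussianPDFReal m v x * (x - m) ^ 2) := by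
  have h : Integrable (fun x => (x - m) ^ 2) (gaussianReal m v) :=
    ((memLp_id_gaussianReal 2).sub (memLp_const m)).integrable_sq
  rw [gaussianReal_of_var_ne_zero _ hv,
    integrable_withDensity_iff_integrable_smul' (measurable_gaussianPDF m v)
      (ae_of_all _ fun _ => gaussianPDF_lt_top)] at h
  simpa only [toReal_gaussianPDF, smul_eq_mul] using h

lemma integral_gaussianPDFReal_mul_sq_sub (m : ℝ) {v : ℝ≥0} (hv : v ≠ 0) :
    ∫ x, gaussianPDFReal m v x * (x - m) ^ 2 = v := by
  have h := variance_fun_id_gaussianReal (μ := m) (v := v)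
  rw [variance_eq_integral measurable_id'.aemeasurable, integral_id_gaussianReal,
    integral_gaussianReal_eq_integral_smul hv] at h
  simpa only [smul_eq_mul] using h

variable {d : ℕ} {s : ℝ}

lemma gaussIso_eq_prod (hs : 0 < s) (μ x : Fin d → ℝ) :
    gaussIso d μ s x = ∏ i, gaussianPDFReal (μ i) s.toNNReal (x i) := by
  simp only [gaussIso, gaussianPDFReal, Real.coe_toNNReal _ hs.le, Finset.prod_mul_distrib,
    Finset.prod_const, Finset.card_univ, Fintype.card_fin, ← Real.exp_sum, ← Finset.sum_div,
    Finset.sum_neg_distrib]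
  congr 1
  rw [Real.sqrt_eq_rpow, ← Real.rpow_neg_one, ← Real.rpow_mul (by positivity),
    ← Real.rpow_mul_natCast (by positivity)]
  congr 1
  ring

lemma gaussIso_nonneg (hs : 0 ≤ s) (μ x : Fin d → ℝ) : 0 ≤ gaussIso d μ s x := by
  unfold gaussIso; positivity

lemma gaussIso_le (hs : 0 ≤ s) (μ x : Fin d → ℝ) :
    gaussIso d μ s x ≤ (2 * π * s) ^ (-(d : ℝ) / 2) := by
  refine mul_le_of_le_one_right (by positivity) (Real.exp_le_one_iff.2 ?_)
  exact div_nonpos_of_nonpos_of_nonneg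
    (neg_nonpos.2 (Finset.sum_nonneg fun i _ => sq_nonneg _)) (by positivity)

lemma continuous_gaussIso_comp {X : Type*} [TopologicalSpace X] {μ x : X → Fin d → ℝ}
    (hμ : Continuous μ) (hx : Continuous x) :
    Continuous fun p => gaussIso d (μ p) s (x p) := by
  unfold gaussIso
  fun_prop

lemma integrable_gaussIso (hs : 0 < s) (μ : Fin d → ℝ) : Integrable (gaussIso d μ s) := by
  simp_rw [funext (gaussIso_eq_prod hs μ)]
  exact Integrable.fintype_prod fun i => integrable_gaussianPDFReal _ _

lemma integral_gaussIso (hs : 0 < s) (μ : Fin d → ℝ) : ∫ x, gaussIso d μ s x = 1 := by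
  simp_rw [gaussIso_eq_prod hs μ]
  rw [integral_fintype_prod_volume_eq_prod]
  exact Finset.prod_eq_one fun i _ =>
    integral_gaussianPDFReal_eq_one _ (Real.toNNReal_pos.2 hs).ne'

lemma integrable_gaussIso_mul_sum_sq_sub (hs : 0 < s) (μ : Fin d → ℝ) :
    Integrable fun x => gaussIso d μ s x * ∑ j, (x j - μ j) ^ 2 := by
  simp_rw [gaussIso_eq_prod hs μ, Finset.mul_sum]
  exact integrable_finsetSum _ fun j _ => integrable_prod_mul_apply _ (fun t => (t - μ j) ^ 2) j
    (fun i => integrable_gaussianPDFReal _ _)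
    (integrable_gaussianPDFReal_mul_sq_sub _ (Real.toNNReal_pos.2 hs).ne')

lemma integral_gaussIso_mul_sum_sq_sub (hs : 0 < s) (μ : Fin d → ℝ) :
    ∫ x, gaussIso d μ s x * ∑ j, (x j - μ j) ^ 2 = d * s := by
  have hv := (Real.toNNReal_pos.2 hs).ne'
  simp_rw [gaussIso_eq_prod hs μ, Finset.mul_sum]
  rw [integral_finsetSum _ fun j _ => integrable_prod_mul_apply _ (fun t => (t - μ j) ^ 2) j
    (fun i => integrable_gaussianPDFReal _ _) (integrable_gaussianPDFReal_mul_sq_sub _ hv)]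
  rw [Finset.sum_congr rfl fun j _ => integral_prod_mul_apply _ (fun t => (t - μ j) ^ 2) j]
  simp [integral_gaussianPDFReal_mul_sq_sub _ hv,
    integral_gaussianPDFReal_eq_one _ hv, hs.le]

section WeightedMean

variable {ι : Type*} [Fintype ι] {μ : Measure (ι → ℝ)} {w : (ι → ℝ) → ℝ}

noncomputable def weightedMean (μ : Measure (ι → ℝ)) (w : (ι → ℝ) → ℝ) (i : ι) : ℝ :=
  (∫ x, w x * x i ∂μ) / ∫ x, w x ∂μ

lemma mul_sum_sq_sub_eq (w : ℝ) (x t : ι → ℝ) :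
    w * ∑ i, (x i - t i) ^ 2 = w * ∑ i, x i ^ 2 + ∑ i, (t i ^ 2 * w - 2 * t i * (w * x i)) := by
  rw [Finset.mul_sum, Finset.mul_sum, ← Finset.sum_add_distrib]
  exact Finset.sum_congr rfl fun i _ => by ring

lemma integrable_mul_apply_of_sum_sq (hw0 : ∀ x, 0 ≤ w x) (hw : Integrable w μ)
    (hw2 : Integrable (fun x => w x * ∑ i, x i ^ 2) μ) (i : ι) :
    Integrable (fun x => w x * x i) μ := by
  refine (hw.add hw2).mono' (hw.aestronglyMeasurable.mul (continuous_apply i).aestronglyMeasurable)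
    (ae_of_all _ fun x => ?_)
  have hi : x i ^ 2 ≤ ∑ j, x j ^ 2 :=
    Finset.single_le_sum (fun j _ => sq_nonneg (x j)) (Finset.mem_univ i)
  rw [norm_mul, Real.norm_of_nonneg (hw0 x), Real.norm_eq_abs, Pi.add_apply, ← mul_one_add]
  exact mul_le_mul_of_nonneg_left (by nlinarith [sq_abs (x i), abs_nonneg (x i)]) (hw0 x)

lemma integral_mul_sum_sq_sub (hw0 : ∀ x, 0 ≤ w x) (hw : Integrable w μ)
    (hw2 : Integrable (fun x => w x * ∑ i, x i ^ 2) μ)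
    (t : ι → ℝ) :
    ∫ x, w x * ∑ i, (x i - t i) ^ 2 ∂μ = ∫ x, w x * ∑ i, x i ^ 2 ∂μ
      + ∑ i, (t i ^ 2 * ∫ x, w x ∂μ - 2 * t i * ∫ x, w x * x i ∂μ) := by
  have hterm : ∀ i, Integrable (fun x => t i ^ 2 * w x - 2 * t i * (w x * x i)) μ := fun i =>
    (hw.const_mul _).sub ((integrable_mul_apply_of_sum_sq hw0 hw hw2 i).const_mul _)
  simp_rw [mul_sum_sq_sub_eq]
  rw [integral_add hw2 (integrable_finsetSum _ fun i _ => hterm i),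
    integral_finsetSum _ fun i _ => hterm i]
  simp_rw [integral_sub (hw.const_mul _)
    ((integrable_mul_apply_of_sum_sq hw0 hw hw2 _).const_mul _), integral_const_mul]

lemma integral_mul_sum_sq_sub_weightedMean_le (hw0 : ∀ x, 0 ≤ w x) (hw : Integrable w μ)
    (hw2 : Integrable (fun x => w x * ∑ i, x i ^ 2) μ)
    (t : ι → ℝ) :
    ∫ x, w x * ∑ i, (x i - weightedMean μ w i) ^ 2 ∂μ ≤ ∫ x, w x * ∑ i, (x i - t i) ^ 2 ∂μ := by
  set m := weightedMean μ w
  have hI0 : 0 ≤ ∫ x, w x ∂μ := integral_nonneg hw0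
  have hI : ∀ i, ∫ x, w x * x i ∂μ = m i * ∫ x, w x ∂μ := by
    intro i
    rcases hI0.eq_or_lt with h0 | hpos
    · have hw_ae : w =ᵐ[μ] 0 := (integral_eq_zero_iff_of_nonneg hw0 hw).1 h0.symm
      rw [← h0, mul_zero]
      exact integral_eq_zero_of_ae (hw_ae.mono fun x hx => by simp [hx])
    · exact (div_mul_cancel₀ _ hpos.ne').symm
  rw [integral_mul_sum_sq_sub hw0 hw hw2, integral_mul_sum_sq_sub hw0 hw hw2,
    add_le_add_iff_left]
  refine Finset.sum_le_sum fun i _ => ?_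
  rw [hI]
  nlinarith [mul_nonneg hI0 (sq_nonneg (t i - m i))]

end WeightedMean

section Joint

variable {d : ℕ} {β : ℕ → ℝ} {q0 : (Fin d → ℝ) → ℝ} {n : ℕ}

lemma joint0n_nonneg (hq0 : ∀ v, 0 ≤ q0 v) (hB : 0 ≤ betaBar β n) (x0 xn : Fin d → ℝ) :
    0 ≤ joint0n d β q0 n x0 xn :=
  mul_nonneg (hq0 x0) (gaussIso_nonneg hB _ _)

lemma joint0n_mul_sum_sq_sub_nonneg (hq0 : ∀ v, 0 ≤ q0 v) (hB : 0 ≤ betaBar β n)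
    (x0 xn t : Fin d → ℝ) : 0 ≤ joint0n d β q0 n x0 xn * ∑ i, (x0 i - t i) ^ 2 :=
  mul_nonneg (joint0n_nonneg hq0 hB x0 xn) (Finset.sum_nonneg fun _ _ => sq_nonneg _)

lemma measurable_joint0n (hq0m : Measurable q0) :
    Measurable (Function.uncurry (joint0n d β q0 n)) :=
  (hq0m.comp measurable_fst).mul
    (continuous_gaussIso_comp (by fun_prop) continuous_snd).measurable

lemma integrable_joint0n_mul_left (hB : 0 ≤ betaBar β n) {f : (Fin d → ℝ) → ℝ}
    (hf : Integrable fun x0 => q0 x0 * f x0) (xn : Fin d → ℝ) :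
    Integrable fun x0 => joint0n d β q0 n x0 xn * f x0 := by
  simp_rw [joint0n, mul_comm (q0 _), mul_assoc]
  refine hf.bdd_mul (c := (2 * π * betaBar β n) ^ (-(d : ℝ) / 2))
    (continuous_gaussIso_comp (by fun_prop) continuous_const).aestronglyMeasurable
    (ae_of_all _ fun x0 => ?_)
  rw [Real.norm_of_nonneg (gaussIso_nonneg hB _ _)]
  exact gaussIso_le hB _ _

lemma integrable_joint0n_left (hB : 0 ≤ betaBar β n) (hq0 : Integrable q0) (xn : Fin d → ℝ) :
    Integrable fun x0 => joint0n d β q0 n x0 xn := by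
  simpa using integrable_joint0n_mul_left hB (f := fun _ => 1) (by simpa using hq0) xn

lemma integral_joint0n_right (hB : 0 < betaBar β n) (x0 : Fin d → ℝ) :
    ∫ xn, joint0n d β q0 n x0 xn = q0 x0 := by
  simp only [joint0n]
  rw [integral_const_mul, integral_gaussIso hB, mul_one]

lemma integrable_joint0n (hq0 : ∀ v, 0 ≤ q0 v) (hq0m : Measurable q0) (hq0_int : Integrable q0)
    (hB : 0 < betaBar β n) :
    Integrable (Function.uncurry (joint0n d β q0 n)) (volume.prod volume) := by
  refine integrable_prod_of_nonneg (measurable_joint0n hq0m).aestronglyMeasurable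
    (fun p => joint0n_nonneg hq0 hB.le p.1 p.2) (fun x0 => ?_) ?_
  · simp only [Function.uncurry_apply_pair, joint0n]
    exact (integrable_gaussIso hB _).const_mul (q0 x0)
  · simpa only [Function.uncurry_apply_pair, integral_joint0n_right hB] using hq0_int

lemma integral_margN (hq0 : ∀ v, 0 ≤ q0 v) (hq0m : Measurable q0) (hq0_one : ∫ v, q0 v = 1)
    (hB : 0 < betaBar β n) : ∫ xn, margN d β q0 n xn = 1 := by
  unfold margN
  rw [← integral_integral_swap
    (integrable_joint0n hq0 hq0m (integrable_of_integral_eq_one hq0_one) hB)]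
  simp_rw [integral_joint0n_right hB, hq0_one]

lemma integrable_margN (hq0 : ∀ v, 0 ≤ q0 v) (hq0m : Measurable q0) (hq0_int : Integrable q0)
    (hB : 0 < betaBar β n) : Integrable (margN d β q0 n) :=
  (integrable_joint0n hq0 hq0m hq0_int hB).integral_prod_right

lemma integral_joint0n_mul_sum_sq_sub_condMean0_le (hq0 : ∀ v, 0 ≤ q0 v)
    (hq0_int : Integrable q0) (hq0_mom2 : Integrable fun v => q0 v * ∑ i, v i ^ 2)
    (hB : 0 ≤ betaBar β n) (xn t : Fin d → ℝ) :
    ∫ x0, joint0n d β q0 n x0 xn * ∑ i, (x0 i - condMean0 d β q0 n xn i) ^ 2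
      ≤ ∫ x0, joint0n d β q0 n x0 xn * ∑ i, (x0 i - t i) ^ 2 :=
  integral_mul_sum_sq_sub_weightedMean_le (fun x0 => joint0n_nonneg hq0 hB x0 xn)
    (integrable_joint0n_left hB hq0_int xn) (integrable_joint0n_mul_left hB hq0_mom2 xn) t

lemma EtrCov_nonneg (hq0 : ∀ v, 0 ≤ q0 v) (hB : 0 ≤ betaBar β n) : 0 ≤ EtrCov d β q0 n :=
  integral_nonneg fun _ => integral_nonneg fun _ => joint0n_mul_sum_sq_sub_nonneg hq0 hB _ _ _

lemma EtrCov_le_integral (hq0 : ∀ v, 0 ≤ q0 v) (hB : 0 ≤ betaBar β n)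
    {G : (Fin d → ℝ) → ℝ} (hG : Integrable G)
    (hle : ∀ xn, ∫ x0, joint0n d β q0 n x0 xn * ∑ i, (x0 i - condMean0 d β q0 n xn i) ^ 2 ≤ G xn) :
    EtrCov d β q0 n ≤ ∫ xn, G xn :=
  integral_mono_of_nonneg
    (ae_of_all _ fun _ => integral_nonneg fun _ => joint0n_mul_sum_sq_sub_nonneg hq0 hB _ _ _) hG
    (ae_of_all _ hle)

lemma EtrCov_le_mul_betaBar_div_alphaBar (hq0 : ∀ v, 0 ≤ q0 v) (hq0m : Measurable q0)
    (hq0_one : ∫ v, q0 v = 1) (hq0_mom2 : Integrable fun v => q0 v * ∑ i, v i ^ 2)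
    (hA : 0 < alphaBar β n) (hB : 0 < betaBar β n) : EtrCov d β q0 n ≤ d * betaBar β n / alphaBar β n := by
  have hq0_int := integrable_of_integral_eq_one hq0_one
  set K := √(alphaBar β n)
  set F := fun x0 xn : Fin d → ℝ => joint0n d β q0 n x0 xn * ∑ i, (x0 i - xn i / K) ^ 2
  have hF : ∀ x0 xn, F x0 xn = q0 x0 / alphaBar β n *
      (gaussIso d (fun i => K * x0 i) (betaBar β n) xn * ∑ i, (xn i - K * x0 i) ^ 2) := by
    intro x0 xn
    have hK : 0 < K := Real.sqrt_pos.2 hA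
    rw [← Real.sq_sqrt hA.le]
    simp only [F, joint0n, Finset.mul_sum]
    refine Finset.sum_congr rfl fun i _ => ?_
    field_simp
    ring
  have hF_inner : ∀ x0, ∫ xn, F x0 xn = q0 x0 * (d * betaBar β n / alphaBar β n) := by
    intro x0
    simp_rw [hF, integral_const_mul, integral_gaussIso_mul_sum_sq_sub hB]
    ring
  have hF_int : Integrable (Function.uncurry F) (volume.prod volume) := by
    refine integrable_prod_of_nonneg ?_ (fun p => ?_) (fun x0 => ?_) ?_
    · exact ((measurable_joint0n hq0m).mul (by fun_prop)).aestronglyMeasurable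
    · exact joint0n_mul_sum_sq_sub_nonneg hq0 hB.le _ _ _
    · simp_rw [Function.uncurry_apply_pair, hF]
      exact (integrable_gaussIso_mul_sum_sq_sub hB _).const_mul _
    · simpa only [Function.uncurry_apply_pair, hF_inner] using hq0_int.mul_const _
  calc EtrCov d β q0 n ≤ ∫ xn, ∫ x0, F x0 xn :=
        EtrCov_le_integral hq0 hB.le hF_int.integral_prod_right fun xn =>
          integral_joint0n_mul_sum_sq_sub_condMean0_le hq0 hq0_int hq0_mom2 hB.le xn _
    _ = ∫ x0, q0 x0 * (d * betaBar β n / alphaBar β n) := by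
        rw [← integral_integral_swap hF_int]
        simp_rw [hF_inner]
    _ = d * betaBar β n / alphaBar β n := by rw [integral_mul_const, hq0_one, one_mul]

lemma EtrCov_le_of_support (hq0 : ∀ v, 0 ≤ q0 v) (hq0m : Measurable q0)
    (hq0_one : ∫ v, q0 v = 1) (hq0_mom2 : Integrable fun v => q0 v * ∑ i, v i ^ 2)
    (hB : 0 < betaBar β n) {a b : ℝ} (hsupp : ∀ v, q0 v ≠ 0 → ∀ i, v i ∈ Set.Icc a b) :
    EtrCov d β q0 n ≤ d * ((b - a) / 2) ^ 2 := by
  have hq0_int := integrable_of_integral_eq_one hq0_one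
  set r2 := d * ((b - a) / 2) ^ 2
  have hpt : ∀ x0 xn, joint0n d β q0 n x0 xn * ∑ i, (x0 i - (a + b) / 2) ^ 2
      ≤ joint0n d β q0 n x0 xn * r2 := by
    intro x0 xn
    by_cases hx0 : q0 x0 = 0
    · simp [joint0n, hx0]
    refine mul_le_mul_of_nonneg_left ?_ (joint0n_nonneg hq0 hB.le x0 xn)
    calc ∑ i, (x0 i - (a + b) / 2) ^ 2 ≤ ∑ _i : Fin d, ((b - a) / 2) ^ 2 :=
          Finset.sum_le_sum fun i _ => by
            obtain ⟨hai, hib⟩ := hsupp x0 hx0 i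
            nlinarith
      _ = r2 := by simp [r2]
  have hinner : ∀ xn, ∫ x0, joint0n d β q0 n x0 xn * ∑ i, (x0 i - condMean0 d β q0 n xn i) ^ 2
      ≤ r2 * margN d β q0 n xn := fun xn => calc
    _ ≤ ∫ x0, joint0n d β q0 n x0 xn * ∑ i, (x0 i - (a + b) / 2) ^ 2 :=
        integral_joint0n_mul_sum_sq_sub_condMean0_le hq0 hq0_int hq0_mom2 hB.le xn _
    _ ≤ ∫ x0, joint0n d β q0 n x0 xn * r2 :=
        integral_mono_of_nonneg (ae_of_all _ fun _ => joint0n_mul_sum_sq_sub_nonneg hq0 hB.le _ _ _)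
          ((integrable_joint0n_left hB.le hq0_int xn).mul_const _) (ae_of_all _ fun x0 => hpt x0 xn)
    _ = r2 * margN d β q0 n xn := by rw [integral_mul_const, mul_comm, margN]
  calc EtrCov d β q0 n ≤ ∫ xn, r2 * margN d β q0 n xn :=
        EtrCov_le_integral hq0 hB.le ((integrable_margN hq0 hq0m hq0_int hB).const_mul _) hinner
    _ = r2 := by rw [integral_const_mul, integral_margN hq0 hq0m hq0_one hB, mul_one]

end Joint

section Schedule

variable {β : ℕ → ℝ} {n : ℕ}

lemma alphaBar_pos (h : ∀ i ∈ Finset.Icc 1 n, β i < 1) : 0 < alphaBar β n :=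
  Finset.prod_pos fun i hi => sub_pos.2 (h i hi)

lemma alphaBar_eq_mul (hn : 1 ≤ n) : alphaBar β n = alphaBar β (n - 1) * (1 - β n) := by
  obtain ⟨k, rfl⟩ := Nat.exists_eq_add_of_le' hn
  simp [alphaBar, Finset.prod_Icc_succ_top]

lemma alphaBar_lt_one (hn : 1 ≤ n) (h : ∀ i ∈ Finset.Icc 1 n, β i ∈ Set.Ioo 0 1) :
    alphaBar β n < 1 := by
  have h' : ∀ i ∈ Finset.Icc 1 (n - 1), β i ∈ Set.Ioo 0 1 := fun i hi =>
    h i (Finset.Icc_subset_Icc_right (Nat.sub_le n 1) hi)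
  rw [alphaBar_eq_mul hn]
  refine mul_lt_one_of_nonneg_of_lt_one_right ?_ ?_ ?_
  · exact Finset.prod_le_one (fun i hi => sub_nonneg.2 (h' i hi).2.le)
      fun i hi => sub_le_self _ (h' i hi).1.le
  · exact sub_nonneg.2 (h n (Finset.right_mem_Icc.2 hn)).2.le
  · exact sub_lt_self _ (h n (Finset.right_mem_Icc.2 hn)).1

end Schedule

lemma sq_sqrt_sub_mul_sqrt_div_mul {a α B : ℝ} (ha : 0 < a) (hα : 0 < α) (hB : 0 < B) (s : ℝ) :
    (√a - s * √(a * α / B)) ^ 2 * (B / (a * α)) = (√(B / α) - s) ^ 2 := by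
  have h₁ : √a * √(B / (a * α)) = √(B / α) := by
    rw [← Real.sqrt_mul ha.le]
    congr 1
    field_simp
  have h₂ : √(a * α / B) * √(B / (a * α)) = 1 := by
    rw [← Real.sqrt_mul (by positivity), div_mul_div_cancel₀ (by positivity),
      div_self (by positivity), Real.sqrt_one]
  rw [← Real.sq_sqrt (by positivity : 0 ≤ B / (a * α)), ← mul_pow, sub_mul, h₁, mul_assoc, h₂,
    mul_one]

theorem stmt_14_general {d N : ℕ} (β lam : ℕ → ℝ)
    (hβ : ∀ n ∈ Finset.Icc 1 N, β n ∈ Set.Ioo (0 : ℝ) 1)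
    (q0 : (Fin d → ℝ) → ℝ)
    (hq0_nonneg : ∀ v, 0 ≤ q0 v) (hq0_meas : Measurable q0) (hq0_one : ∫ v, q0 v = 1)
    (hq0_mom2 : Integrable (fun v => q0 v * ∑ i, (v i) ^ 2)) :
    ∀ n ∈ Finset.Icc 1 N,
      (lam n ^ 2 ≤ sigmaStar2 d β lam q0 n) ∧
      (sigmaStar2 d β lam q0 n ≤ lam n ^ 2 +
        (Real.sqrt (betaBar β n / (1 - β n)) -
            Real.sqrt (betaBar β (n - 1) - lam n ^ 2)) ^ 2) ∧
      (∀ a b : ℝ, (∀ v, q0 v ≠ 0 → ∀ i, v i ∈ Set.Icc a b) →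
        sigmaStar2 d β lam q0 n ≤ lam n ^ 2 +
          (Real.sqrt (alphaBar β (n - 1)) -
              Real.sqrt (betaBar β (n - 1) - lam n ^ 2) *
                Real.sqrt (alphaBar β n / betaBar β n)) ^ 2 * ((b - a) / 2) ^ 2) := by
  intro n hn
  obtain ⟨hn1, hnN⟩ := Finset.mem_Icc.mp hn
  have hβn : ∀ i ∈ Finset.Icc 1 n, β i ∈ Set.Ioo 0 1 := fun i hi =>
    hβ i (Finset.Icc_subset_Icc_right hnN hi)
  have hA : 0 < alphaBar β n := alphaBar_pos fun i hi => (hβn i hi).2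
  have hAp : 0 < alphaBar β (n - 1) := alphaBar_pos fun i hi =>
    (hβn i (Finset.Icc_subset_Icc_right (Nat.sub_le n 1) hi)).2
  have hα : 0 < 1 - β n := sub_pos.2 (hβn n (Finset.right_mem_Icc.2 hn1)).2
  have hB : 0 < betaBar β n := sub_pos.2 (alphaBar_lt_one hn1 hβn)
  have hE := EtrCov_nonneg hq0_nonneg hB.le
  refine ⟨le_add_of_nonneg_right (by positivity), ?_, fun a b hsupp => ?_⟩
  · have hEd : EtrCov d β q0 n / d ≤ betaBar β n / alphaBar β n :=
      div_le_of_le_mul₀ d.cast_nonneg (by positivity) <|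
        (EtrCov_le_mul_betaBar_div_alphaBar hq0_nonneg hq0_meas hq0_one hq0_mom2 hA hB).trans_eq
          (by ring)
    calc sigmaStar2 d β lam q0 n ≤ lam n ^ 2 + (√(alphaBar β (n - 1)) -
          √(betaBar β (n - 1) - lam n ^ 2) * √(alphaBar β n / betaBar β n)) ^ 2 *
            (betaBar β n / alphaBar β n) := by unfold sigmaStar2; gcongr
      _ = _ := by
        rw [alphaBar_eq_mul hn1, sq_sqrt_sub_mul_sqrt_div_mul hAp hα hB]
  · have hEd : EtrCov d β q0 n / d ≤ ((b - a) / 2) ^ 2 :=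
      div_le_of_le_mul₀ d.cast_nonneg (by positivity) <|
        (EtrCov_le_of_support hq0_nonneg hq0_meas hq0_one hq0_mom2 hB hsupp).trans_eq (by ring)
    unfold sigmaStar2
    gcongr

/-- bounds of the optimal reverse variance: for the generalized forward
process, `λₙ² ≤ σₙ*² ≤ λₙ² + (√(β̄ₙ/αₙ) − √(β̄_{n−1} − λₙ²))²`; if moreover the data
distribution `q(x₀)` is supported in `[a,b]^d`, then also
`σₙ*² ≤ λₙ² + (√ᾱ_{n−1} − √(β̄_{n−1} − λₙ²)·√(ᾱₙ/β̄ₙ))² ((b−a)/2)²`. -/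
theorem stmt_14 {d N : ℕ} (hd : 0 < d) (hN : 1 ≤ N) (β lam : ℕ → ℝ)
    (hβ : ∀ n ∈ Finset.Icc 1 N, β n ∈ Set.Ioo (0 : ℝ) 1)
    (hlam_nonneg : ∀ n ∈ Finset.Icc 1 N, 0 ≤ lam n)
    (hlam_le : ∀ n ∈ Finset.Icc 1 N, lam n ^ 2 ≤ betaBar β (n - 1))
    (q0 : (Fin d → ℝ) → ℝ)
    (hq0_nonneg : ∀ v, 0 ≤ q0 v) (hq0_meas : Measurable q0) (hq0_one : ∫ v, q0 v = 1)
    (hq0_mom2 : Integrable (fun v => q0 v * ∑ i, (v i) ^ 2)) :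
    ∀ n ∈ Finset.Icc 1 N,
      (lam n ^ 2 ≤ sigmaStar2 d β lam q0 n) ∧
      (sigmaStar2 d β lam q0 n ≤ lam n ^ 2 +
        (Real.sqrt (betaBar β n / (1 - β n)) -
            Real.sqrt (betaBar β (n - 1) - lam n ^ 2)) ^ 2) ∧
      (∀ a b : ℝ, (∀ v, q0 v ≠ 0 → ∀ i, v i ∈ Set.Icc a b) →
        sigmaStar2 d β lam q0 n ≤ lam n ^ 2 +
          (Real.sqrt (alphaBar β (n - 1)) -
              Real.sqrt (betaBar β (n - 1) - lam n ^ 2) *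
                Real.sqrt (alphaBar β n / betaBar β n)) ^ 2 * ((b - a) / 2) ^ 2) :=
  stmt_14_general β lam hβ q0 hq0_nonneg hq0_meas hq0_one hq0_mom2
end Gaussian
end
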